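/- Davis–Kahan sin θ bound for the leading eigenvector: let A, B be real symmetric p × p matrices with unit leading eigenvectors u, v corresponding to largest eigenvalues α₁ and β₁, and suppose the eigengap δ = α₁ − α₂ > 0 of A satisfies ‖A − B‖ < δ/2. Then sin∠(u, v) ≤ 2‖A − B‖/δ, where sin²∠(u,v) = 1 − ⟨u,v⟩². -/

import Mathlib

/-!
Write `ε = ‖A - B‖` and expand `v` in an orthonormal eigenbasis `(f k)` of `A`, with `u = ±f j`.
Testing `B` against `u` gives `β₁ ≥ α₁ - ε` (Weyl), so every other eigenvalue of `A` lies at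
distance at least `δ - ε ≥ δ / 2` from `β₁`. Since `(A - β₁) v = (A - B) v` has norm at most `ε`,
Parseval in the eigenbasis gives `(δ - ε)² ∑_{k ≠ j} ⟪f k, v⟫² ≤ ε²`, and the sum is `1 - ⟪u, v⟫²`.
-/

open Matrix

/-- The spectral (ℓ²→ℓ² operator) norm of a real square matrix. -/
noncomputable def specNorm {p : ℕ} (M : Matrix (Fin p) (Fin p) ℝ) : ℝ :=
  ‖LinearMap.toContinuousLinearMap (Matrix.toEuclideanLin M)‖

open scoped RealInnerProductSpace

namespace OrthonormalBasis

variable {ι E : Type*} [Fintype ι] [NormedAddCommGroup E] [InnerProductSpace ℝ E]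

lemma sum_erase_sq_inner_right [DecidableEq ι] (b : OrthonormalBasis ι ℝ E) (j : ι) (x : E) :
    ∑ i ∈ Finset.univ.erase j, ⟪b i, x⟫ ^ 2 = ‖x‖ ^ 2 - ⟪b j, x⟫ ^ 2 := by
  rw [← b.sum_sq_inner_right, ← Finset.sum_erase_add _ _ (Finset.mem_univ j), add_sub_cancel_right]

lemma sq_inner_eq_of_forall_ne_inner_eq_zero (b : OrthonormalBasis ι ℝ E) {j : ι} {u : E}
    (hu : ∀ i, i ≠ j → ⟪b i, u⟫ = 0) (v : E) :
    ⟪u, v⟫ ^ 2 = ‖u‖ ^ 2 * ⟪b j, v⟫ ^ 2 := by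
  have hu_eq : u = ⟪b j, u⟫ • b j := by
    conv_lhs => rw [← b.sum_repr' u]
    exact Finset.sum_eq_single j (fun i _ hi => by rw [hu i hi, zero_smul])
      (fun h => absurd (Finset.mem_univ j) h)
  rw [hu_eq, real_inner_smul_left, norm_smul, b.orthonormal.1 j, mul_one, Real.norm_eq_abs,
    sq_abs, mul_pow]

end OrthonormalBasis

namespace LinearMap.IsSymmetric

variable {E : Type*} [NormedAddCommGroup E] [InnerProductSpace ℝ E] {T : E →ₗ[ℝ] E}

lemma inner_apply_of_apply_eq_smul (hT : T.IsSymmetric) {w : E} {c : ℝ} (hw : T w = c • w)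
    (x : E) : ⟪w, T x⟫ = c * ⟪w, x⟫ := by
  rw [← hT, hw, real_inner_smul_left]

lemma inner_eq_zero_of_apply_eq_smul (hT : T.IsSymmetric) {w u : E} {a c : ℝ}
    (hw : T w = a • w) (hu : T u = c • u) (hac : a ≠ c) : ⟪w, u⟫ = 0 := by
  have h := hT.inner_apply_of_apply_eq_smul hw u
  rw [hu, real_inner_smul_right] at h
  exact mul_left_cancel₀ (sub_ne_zero.2 hac) (by linarith : (a - c) * ⟪w, u⟫ = (a - c) * 0)

variable {ι : Type*} [Fintype ι] {b : OrthonormalBasis ι ℝ E} {μ : ι → ℝ}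

lemma inner_apply_self_le_iSup_mul_norm_sq (hT : T.IsSymmetric)
    (hb : ∀ i, T (b i) = μ i • b i) (x : E) : ⟪x, T x⟫ ≤ (⨆ i, μ i) * ‖x‖ ^ 2 := by
  calc ⟪x, T x⟫ = ∑ i, μ i * ⟪b i, x⟫ ^ 2 := by
        rw [← b.sum_inner_mul_inner]
        refine Finset.sum_congr rfl fun i _ => ?_
        rw [hT.inner_apply_of_apply_eq_smul (hb i), real_inner_comm]
        ring
    _ ≤ ∑ i, (⨆ i, μ i) * ⟪b i, x⟫ ^ 2 := by
        gcongr with i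
        exact le_ciSup (Set.finite_range μ).bddAbove i
    _ = (⨆ i, μ i) * ‖x‖ ^ 2 := by rw [← Finset.mul_sum, b.sum_sq_inner_right]

lemma sq_mul_sum_erase_sq_inner_le [DecidableEq ι] (hT : T.IsSymmetric)
    (hb : ∀ i, T (b i) = μ i • b i) {j : ι} {c g : ℝ} (hg : 0 ≤ g)
    (hgap : ∀ i, i ≠ j → g ≤ |μ i - c|) (x : E) :
    g ^ 2 * ∑ i ∈ Finset.univ.erase j, ⟪b i, x⟫ ^ 2 ≤ ‖T x - c • x‖ ^ 2 := by
  have hcoord : ∀ i, ⟪b i, T x - c • x⟫ = (μ i - c) * ⟪b i, x⟫ := fun i => by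
    rw [inner_sub_right, hT.inner_apply_of_apply_eq_smul (hb i), real_inner_smul_right]
    ring
  calc g ^ 2 * ∑ i ∈ Finset.univ.erase j, ⟪b i, x⟫ ^ 2
      ≤ ∑ i ∈ Finset.univ.erase j, ((μ i - c) * ⟪b i, x⟫) ^ 2 := by
        rw [Finset.mul_sum]
        refine Finset.sum_le_sum fun i hi => ?_
        rw [mul_pow, ← sq_abs (μ i - c)]
        gcongr
        exact hgap i (Finset.ne_of_mem_erase hi)
    _ ≤ ∑ i, ⟪b i, T x - c • x⟫ ^ 2 := by
        simp only [hcoord]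
        exact Finset.sum_le_sum_of_subset_of_nonneg (Finset.subset_univ _)
          fun i _ _ => sq_nonneg _
    _ = ‖T x - c • x‖ ^ 2 := b.sum_sq_inner_right _

end LinearMap.IsSymmetric

namespace Matrix

variable {p : ℕ}

lemma IsHermitian.toEuclideanLin_eigenvectorBasis {A : Matrix (Fin p) (Fin p) ℝ}
    (hA : A.IsHermitian) (k : Fin p) :
    toEuclideanLin A (hA.eigenvectorBasis k) = hA.eigenvalues k • hA.eigenvectorBasis k := by
  ext i
  simpa [toLpLin_apply] using congrFun (hA.mulVec_eigenvectorBasis k) i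

lemma norm_toEuclideanLin_apply_le (M : Matrix (Fin p) (Fin p) ℝ) (x : EuclideanSpace ℝ (Fin p)) :
    ‖toEuclideanLin M x‖ ≤ specNorm M * ‖x‖ :=
  (LinearMap.toContinuousLinearMap (toEuclideanLin M)).le_opNorm x

lemma IsHermitian.sub_specNorm_le_iSup_eigenvalues {A B : Matrix (Fin p) (Fin p) ℝ}
    (hB : B.IsHermitian) {u : EuclideanSpace ℝ (Fin p)} (hu : ‖u‖ = 1) {a : ℝ}
    (huA : toEuclideanLin A u = a • u) : a - specNorm (A - B) ≤ ⨆ i, hB.eigenvalues i := by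
  have hAu : ⟪u, toEuclideanLin A u⟫ = a := by
    rw [huA, real_inner_smul_right, real_inner_self_eq_norm_sq, hu]; ring
  have hE : ⟪u, toEuclideanLin (A - B) u⟫ ≤ specNorm (A - B) :=
    calc _ ≤ ‖u‖ * ‖toEuclideanLin (A - B) u‖ := real_inner_le_norm _ _
      _ ≤ specNorm (A - B) := by
        simpa [hu] using norm_toEuclideanLin_apply_le (A - B) u
  have hB_le := (isSymmetric_toEuclideanLin_iff.2 hB).inner_apply_self_le_iSup_mul_norm_sq
    hB.toEuclideanLin_eigenvectorBasis u
  rw [hu, one_pow, mul_one] at hB_le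
  rw [map_sub, LinearMap.sub_apply, inner_sub_right, hAu] at hE
  linarith

end Matrix

lemma Antitone.apply_le_of_eq_comp_perm {p : ℕ} {γ : Type*} [Preorder γ] {α μ : Fin p → γ}
    (hα : Antitone α) {e : Equiv.Perm (Fin p)} (he : α = μ ∘ e) {i₀ i₁ : Fin p}
    (h₁ : ∀ i, i ≠ i₀ → i₁ ≤ i) {k : Fin p} (hk : k ≠ e i₀) : μ k ≤ α i₁ := by
  have hk' : μ k = α (e.symm k) := by rw [he, Function.comp_apply, e.apply_symm_apply]
  rw [hk']
  exact hα (h₁ _ fun h => hk (by rw [← h, e.apply_symm_apply]))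

lemma Real.sqrt_le_two_mul_div_of_sq_sub_mul_le {s ε δ : ℝ} (hε : 0 ≤ ε) (hεδ : ε < δ / 2)
    (h : (δ - ε) ^ 2 * s ≤ ε ^ 2) : √s ≤ 2 * ε / δ := by
  have hδ : 0 < δ := by linarith
  rw [Real.sqrt_le_left (by positivity), div_pow, le_div_iff₀ (by positivity)]
  rcases le_or_gt 0 s with hs | hs
  · nlinarith [mul_le_mul_of_nonneg_right (pow_le_pow_left₀ (by linarith) (by linarith :
      δ / 2 ≤ δ - ε) 2) hs]
  · nlinarith

theorem davis_kahan_leading_eigenvector {p : ℕ} (hp : 2 ≤ p)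
    (A B : Matrix (Fin p) (Fin p) ℝ)
    (hA : A.IsHermitian) (hB : B.IsHermitian)
    (α : Fin p → ℝ) (hαdec : Antitone α)
    (hα : ∃ e : Equiv.Perm (Fin p), α = hA.eigenvalues ∘ e)
    (β₁ : ℝ) (hβ₁ : β₁ = ⨆ i, hB.eigenvalues i)
    (u v : EuclideanSpace ℝ (Fin p)) (hu : ‖u‖ = 1) (hv : ‖v‖ = 1)
    (huA : Matrix.toEuclideanLin A u = α ⟨0, by omega⟩ • u)
    (hvB : Matrix.toEuclideanLin B v = β₁ • v)
    (δ : ℝ) (hδ : δ = α ⟨0, by omega⟩ - α ⟨1, by omega⟩)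
    (hpert : specNorm (A - B) < δ / 2) :
    Real.sqrt (1 - (inner ℝ u v : ℝ)^2) ≤ 2 * specNorm (A - B) / δ := by
  obtain ⟨e, he⟩ := hα
  set ε := specNorm (A - B)
  set f := hA.eigenvectorBasis
  set μ := hA.eigenvalues
  set j := e ⟨0, by omega⟩
  have hsymA := isSymmetric_toEuclideanLin_iff.2 hA
  have hε : 0 ≤ ε := norm_nonneg _
  have hμ_le : ∀ k, k ≠ j → μ k ≤ α ⟨1, by omega⟩ :=
    fun k => hαdec.apply_le_of_eq_comp_perm he fun _ hi =>
      Fin.mk_le_of_le_val (Nat.one_le_iff_ne_zero.2 fun h => hi (Fin.ext h))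
  have hweyl : α ⟨0, by omega⟩ - ε ≤ β₁ := hβ₁ ▸ hB.sub_specNorm_le_iSup_eigenvalues hu huA
  have hgap : ∀ k, k ≠ j → δ - ε ≤ |μ k - β₁| := fun k hk => by
    rw [abs_sub_comm]
    exact (le_abs_self _).trans' (by linarith [hμ_le k hk])
  have hu_perp : ∀ k, k ≠ j → ⟪f k, u⟫ = 0 := fun k hk =>
    hsymA.inner_eq_zero_of_apply_eq_smul (hA.toEuclideanLin_eigenvectorBasis k) huA
      (by linarith [hμ_le k hk])
  have hsin : ∑ k ∈ Finset.univ.erase j, ⟪f k, v⟫ ^ 2 = 1 - ⟪u, v⟫ ^ 2 := by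
    rw [f.sum_erase_sq_inner_right, f.sq_inner_eq_of_forall_ne_inner_eq_zero hu_perp, hu, hv]
    ring
  have hres : ‖toEuclideanLin A v - β₁ • v‖ ≤ ε := by
    simpa [← hvB, hv] using norm_toEuclideanLin_apply_le (A - B) v
  refine Real.sqrt_le_two_mul_div_of_sq_sub_mul_le hε hpert ?_
  calc (δ - ε) ^ 2 * (1 - ⟪u, v⟫ ^ 2) ≤ ‖toEuclideanLin A v - β₁ • v‖ ^ 2 := by
        rw [← hsin]
        exact hsymA.sq_mul_sum_erase_sq_inner_le hA.toEuclideanLin_eigenvectorBasis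
          (by linarith) hgap v
    _ ≤ ε ^ 2 := pow_le_pow_left₀ (norm_nonneg _) hres 2
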